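/- For every t ∈ (0,1], the equation √t·(1 − Φ(x)) = φ(x) admits a unique real solution x, and this solution satisfies x < √t. -/

import Mathlib

open Real MeasureTheory Set
open Filter Topology

/-- Standard normal distribution function `Φ`. -/
noncomputable def normCdf (x : ℝ) : ℝ := ∫ u in Iic x, exp (-u ^ 2 / 2) / sqrt (2 * π)
/-- Standard normal density `φ`. -/
noncomputable def normPdf (x : ℝ) : ℝ := exp (-x ^ 2 / 2) / sqrt (2 * π)

lemma normPdf_pos (x : ℝ) : 0 < normPdf x := by
  have : 0 < sqrt (2 * π) := Real.sqrt_pos.2 (by positivity)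
  exact div_pos (exp_pos _) this

lemma normPdf_eq : normPdf = fun x => exp (-(1/2) * x ^ 2) / sqrt (2 * π) := by
  funext x; rw [normPdf, show -x^2/2 = -(1/2)*x^2 by ring]

lemma normPdf_integrable : Integrable normPdf := by
  rw [normPdf_eq]
  exact (integrable_exp_neg_mul_sq (by norm_num : (0:ℝ) < 1/2)).div_const _

lemma normPdf_total : ∫ x, normPdf x = 1 := by
  rw [normPdf_eq]
  rw [integral_div, integral_gaussian]
  rw [show π / (1/2) = 2 * π by ring]
  rw [div_self (ne_of_gt (Real.sqrt_pos.2 (by positivity)))]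

lemma normPdf_continuous : Continuous normPdf := by
  rw [normPdf_eq]; continuity

lemma normPdf_hasDerivAt (x : ℝ) : HasDerivAt normPdf (-x * normPdf x) x := by
  have h1 : HasDerivAt (fun y : ℝ => -y ^ 2 / 2) (-x) x := by
    have := ((hasDerivAt_pow 2 x).neg.div_const 2)
    exact this.congr_deriv (by push_cast; ring)
  have h2 := (h1.exp).div_const (sqrt (2 * π))
  have : normPdf = fun y : ℝ => exp (-y^2/2) / sqrt (2*π) := rfl
  rw [this]
  exact h2.congr_deriv (by dsimp only; ring)

lemma normCdf_hasDerivAt (x : ℝ) : HasDerivAt normCdf (normPdf x) x := by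
  have key : normCdf = fun y => (∫ u in (0:ℝ)..y, normPdf u) + normCdf 0 := by
    funext y
    have h := intervalIntegral.integral_Iic_sub_Iic
      (normPdf_integrable.integrableOn) (normPdf_integrable.integrableOn) (μ := volume) (a := (0:ℝ)) (b := y)
    have h0 : normCdf y = ∫ u in Iic y, normPdf u := rfl
    have h1 : normCdf 0 = ∫ u in Iic (0:ℝ), normPdf u := rfl
    rw [h0, h1]; linarith [h]
  rw [key]
  exact (intervalIntegral.integral_hasDerivAt_right
    (normPdf_integrable.intervalIntegrable)
    (normPdf_continuous.stronglyMeasurableAtFilter _ _)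
    normPdf_continuous.continuousAt).add_const _

lemma normCdf_continuous : Continuous normCdf :=
  continuous_iff_continuousAt.2 fun x => (normCdf_hasDerivAt x).continuousAt

lemma normPdf_tendsto_atTop : Tendsto normPdf atTop (𝓝 0) := by
  have h1 : Tendsto (fun x : ℝ => -x ^ 2 / 2) atTop atBot := by
    apply Tendsto.atBot_div_const (by norm_num : (0:ℝ) < 2)
    exact tendsto_neg_atTop_atBot.comp (tendsto_pow_atTop (by norm_num))
  have := (Real.tendsto_exp_atBot.comp h1).div_const (sqrt (2 * π))
  exact (by simpa only [Function.comp_def, zero_div] using this :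
    Tendsto (fun x : ℝ => exp (-x^2/2) / sqrt (2*π)) atTop (𝓝 0))

lemma normPdf_tendsto_atBot : Tendsto normPdf atBot (𝓝 0) := by
  have h2 : Tendsto (fun x : ℝ => x ^ 2) atBot atTop := by
    have := (tendsto_pow_atTop (by norm_num : 2 ≠ 0)).comp tendsto_neg_atBot_atTop (α := ℝ)
    simpa [Function.comp_def] using this
  have h1 : Tendsto (fun x : ℝ => -x ^ 2 / 2) atBot atBot := by
    apply Tendsto.atBot_div_const (by norm_num : (0:ℝ) < 2)
    exact tendsto_neg_atTop_atBot.comp h2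
  have := (Real.tendsto_exp_atBot.comp h1).div_const (sqrt (2 * π))
  exact (by simpa only [Function.comp_def, zero_div] using this :
    Tendsto (fun x : ℝ => exp (-x^2/2) / sqrt (2*π)) atBot (𝓝 0))

lemma normCdf_tendsto_atTop : Tendsto normCdf atTop (𝓝 1) := by
  have := (MeasureTheory.aecover_Iic (tendsto_id : Tendsto id (atTop : Filter ℝ) atTop)).integral_tendsto_of_countably_generated
    (μ := volume) normPdf_integrable
  rw [normPdf_total] at this
  exact this

lemma normCdf_tendsto_atBot : Tendsto normCdf atBot (𝓝 0) := by
  have h := (MeasureTheory.aecover_Ioi (tendsto_id : Tendsto id (atBot : Filter ℝ) atBot)).integral_tendsto_of_countably_generated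
    (μ := volume) normPdf_integrable
  rw [normPdf_total] at h
  have heq : ∀ x : ℝ, normCdf x = 1 - ∫ u in Ioi x, normPdf u := by
    intro x
    have := intervalIntegral.integral_Iic_add_Ioi (μ := volume) (b := x)
      normPdf_integrable.integrableOn normPdf_integrable.integrableOn
    rw [normPdf_total] at this
    have h0 : normCdf x = ∫ u in Iic x, normPdf u := rfl
    rw [h0]; linarith
  have := (tendsto_const_nhds (x := (1:ℝ)) (f := atBot)).sub h
  simp only [sub_self] at this
  exact this.congr fun x => (heq x).symm

noncomputable def gfun (s x : ℝ) : ℝ := s * (1 - normCdf x) - normPdf x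

lemma gfun_hasDerivAt (s x : ℝ) : HasDerivAt (gfun s) ((x - s) * normPdf x) x := by
  have h1 := (((normCdf_hasDerivAt x).const_sub 1).const_mul s).sub (normPdf_hasDerivAt x)
  have : gfun s = fun y => s * (1 - normCdf y) - normPdf y := rfl
  rw [this]
  exact h1.congr_deriv (by ring)

lemma gfun_continuous (s : ℝ) : Continuous (gfun s) :=
  ((continuous_const.mul (continuous_const.sub normCdf_continuous)).sub normPdf_continuous)

lemma gfun_strictAntiOn (s : ℝ) : StrictAntiOn (gfun s) (Iic s) := by
  apply strictAntiOn_of_deriv_neg (convex_Iic s) (gfun_continuous s).continuousOn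
  intro x hx
  rw [interior_Iic] at hx
  rw [(gfun_hasDerivAt s x).deriv]
  exact mul_neg_of_neg_of_pos (sub_neg.2 hx) (normPdf_pos x)

lemma gfun_strictMonoOn (s : ℝ) : StrictMonoOn (gfun s) (Ici s) := by
  apply strictMonoOn_of_deriv_pos (convex_Ici s) (gfun_continuous s).continuousOn
  intro x hx
  rw [interior_Ici] at hx
  rw [(gfun_hasDerivAt s x).deriv]
  exact mul_pos (sub_pos.2 hx) (normPdf_pos x)

lemma gfun_tendsto_atTop (s : ℝ) : Tendsto (gfun s) atTop (𝓝 0) := by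
  have := ((tendsto_const_nhds (x := (1:ℝ)) (f := (atTop : Filter ℝ))).sub
    normCdf_tendsto_atTop).const_mul s |>.sub normPdf_tendsto_atTop
  show Tendsto (fun x => s * (1 - normCdf x) - normPdf x) atTop (𝓝 0)
  simpa [gfun] using this

lemma gfun_tendsto_atBot (s : ℝ) : Tendsto (gfun s) atBot (𝓝 s) := by
  have := ((tendsto_const_nhds (x := (1:ℝ)) (f := (atBot : Filter ℝ))).sub
    normCdf_tendsto_atBot).const_mul s |>.sub normPdf_tendsto_atBot
  show Tendsto (fun x => s * (1 - normCdf x) - normPdf x) atBot (𝓝 s)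
  simpa [gfun] using this

lemma gfun_neg (s : ℝ) {y : ℝ} (hy : s ≤ y) : gfun s y < 0 := by
  have h1 : gfun s (y + 1) ≤ 0 := by
    refine ge_of_tendsto (gfun_tendsto_atTop s) ?_
    filter_upwards [eventually_ge_atTop (y + 2)] with z hz
    exact (gfun_strictMonoOn s (by simp; linarith) (by simp; linarith) (by linarith)).le
  have h2 : gfun s y < gfun s (y + 1) :=
    gfun_strictMonoOn s (by simpa using hy) (by simp; linarith) (by linarith)
  linarith

lemma gfun_key (s : ℝ) (hs : 0 < s) :
    ∃ x : ℝ, (s * (1 - normCdf x) = normPdf x ∧ x < s)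
      ∧ ∀ y : ℝ, s * (1 - normCdf y) = normPdf y → y = x := by
  obtain ⟨a, ha1, ha2⟩ := ((
    (gfun_tendsto_atBot s).eventually (eventually_gt_nhds hs)).and
    (eventually_lt_atBot s)).exists
  have h0 : (0:ℝ) ∈ Icc (gfun s s) (gfun s a) := ⟨(gfun_neg s le_rfl).le, ha1.le⟩
  obtain ⟨x, hx, hgx⟩ := intermediate_value_Icc' ha2.le (gfun_continuous s).continuousOn h0
  have hxlt : x < s := by
    rcases lt_or_eq_of_le hx.2 with h | h
    · exact h
    · rw [h] at hgx; exact absurd hgx (ne_of_lt (gfun_neg s le_rfl))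
  have heq : ∀ z : ℝ, (s * (1 - normCdf z) = normPdf z ↔ gfun s z = 0) := by
    intro z; rw [gfun, sub_eq_zero]
  refine ⟨x, ⟨(heq x).2 hgx, hxlt⟩, fun y hy => ?_⟩
  have hgy : gfun s y = 0 := (heq y).1 hy
  have hylt : y < s := by
    by_contra h
    exact absurd hgy (ne_of_lt (gfun_neg s (le_of_not_gt h)))
  exact (gfun_strictAntiOn s).injOn hylt.le hxlt.le (by rw [hgy, hgx])

/-- For `t ∈ (0,1]`, the equation `√t·(1 − Φ(x)) = φ(x)` has a unique real
solution, and this solution is `< √t`. -/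
theorem stmt14 (t : ℝ) (ht0 : 0 < t) (ht1 : t ≤ 1) :
    ∃ x : ℝ, (sqrt t * (1 - normCdf x) = normPdf x ∧ x < sqrt t)
      ∧ ∀ y : ℝ, sqrt t * (1 - normCdf y) = normPdf y → y = x :=
  gfun_key (sqrt t) (sqrt_pos.2 ht0)
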